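/- arXiv:1804.10359 — 3 statements merged into one kernel-verified Lean document; each statement's English description precedes it below -/
import Mathlib

section
/- Let G be a graph containing no copy of K4^- (the diamond graph). Let C be a shortest odd cycle in G with |V(C)| = 2t+1. Then every vertex v of G not on C has at most t neighbors on C. -/
/-!
If `v` were adjacent to both ends of an edge of `C`, these three vertices would form a triangle,
so the shortest odd cycle `C` would itself be a triangle, and `v` together with it would span a
diamond. Hence the neighbours of `v` on `C` contain no edge of `C`, and such a set of vertices of a
cycle of length `2t + 1` has at most `t` elements.
-/

/-- `G` contains a copy of `K₄⁻` (the diamond graph): four distinct vertices carrying all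
six possible edges except the one between the last two. -/
def HasDiamond {V : Type*} (G : SimpleGraph V) : Prop :=
  ∃ a b c d : V, a ≠ b ∧ a ≠ c ∧ a ≠ d ∧ b ≠ c ∧ b ≠ d ∧ c ≠ d ∧
    G.Adj a b ∧ G.Adj a c ∧ G.Adj a d ∧ G.Adj b c ∧ G.Adj b d

/-- `G` is `K₄⁻`-saturated: it contains no diamond, but adding any non-edge creates one. -/
def DiamondSaturated {V : Type*} (G : SimpleGraph V) : Prop :=
  ¬ HasDiamond G ∧ ∀ u v : V, u ≠ v → ¬ G.Adj u v →
    HasDiamond (G ⊔ SimpleGraph.fromEdgeSet {s(u, v)})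

namespace SimpleGraph

variable {V : Type*} {G : SimpleGraph V}

theorem Walk.IsCycle.toFinset_tail_support [DecidableEq V] {u : V} {C : G.Walk u u}
    (hC : C.IsCycle) : C.support.tail.toFinset = C.support.toFinset := by
  conv_rhs => rw [← C.cons_tail_support]
  rw [List.toFinset_cons, Finset.insert_eq_of_mem
    (List.mem_toFinset.2 (Walk.end_mem_tail_support hC.not_nil))]

/-- Every vertex of a cycle is the tail of exactly one dart and the head of exactly one, and no
dart has both ends in the set, so counting the darts by tail and by head gives `2 |S| ≤ length`. -/
theorem Walk.IsCycle.two_mul_card_filter_le_length [DecidableEq V] {u : V} {C : G.Walk u u}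
    (hC : C.IsCycle) (p : V → Prop) [DecidablePred p]
    (hp : ∀ d ∈ C.darts, ¬ (p d.fst ∧ p d.snd)) :
    2 * (C.support.toFinset.filter p).card ≤ C.length := by
  have hcount : C.support.tail.countP p = (C.support.toFinset.filter p).card := by
    rw [List.countP_eq_length_filter, ← List.toFinset_card_of_nodup (hC.support_nodup.filter _),
      List.toFinset_filter, ← hC.toFinset_tail_support]
    simp
  have hfst : C.darts.countP (fun d => p d.fst) = C.support.tail.countP p := by
    rw [C.tail_support_perm_dropLast_support.countP_eq, ← C.map_fst_darts, List.countP_map]; rfl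
  have hsnd : C.darts.countP (fun d => p d.snd) = C.support.tail.countP p := by
    rw [← C.map_snd_darts, List.countP_map]; rfl
  have hdisj : C.darts.countP (fun d => p d.snd) ≤ C.darts.countP (fun d => ¬ p d.fst) :=
    List.countP_mono_left fun d hd hsnd =>
      decide_eq_true fun hfst => hp d hd ⟨hfst, of_decide_eq_true hsnd⟩
  have hsplit := List.length_eq_countP_add_countP (fun d : G.Dart => p d.fst) (l := C.darts)
  rw [C.length_darts] at hsplit
  simp only [decide_eq_true_eq, decide_not] at hsplit hdisj
  omega

theorem Walk.isCycle_triangle {a b c : V} (hab : G.Adj a b) (hbc : G.Adj b c) (hca : G.Adj c a) :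
    (Walk.cons hab (.cons hbc (.cons hca .nil))).IsCycle := by
  simp [Walk.isCycle_def, hab.ne, hbc.ne, hca.ne, hab.ne.symm, hca.ne.symm]

theorem Walk.exists_adj_adj_of_length_eq_three {u : V} {C : G.Walk u u} (hC : C.length = 3)
    {d : G.Dart} (hd : d ∈ C.darts) : ∃ z ∈ C.support, G.Adj z d.fst ∧ G.Adj z d.snd := by
  rcases C with _ | ⟨h₁, _ | ⟨h₂, _ | ⟨h₃, _ | ⟨_, _⟩⟩⟩⟩ <;> simp at hC
  simp only [Walk.darts_cons, Walk.darts_nil, List.mem_cons, List.not_mem_nil, or_false] at hd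
  rcases hd with rfl | rfl | rfl
  · exact ⟨_, by simp, h₃, h₂.symm⟩
  · exact ⟨u, by simp, h₁, h₃.symm⟩
  · exact ⟨_, by simp, h₂, h₁.symm⟩

end SimpleGraph

open SimpleGraph

theorem HasDiamond.of_adj {V : Type*} {G : SimpleGraph V} {a b c d : V} (hab : G.Adj a b)
    (hac : G.Adj a c) (had : G.Adj a d) (hbc : G.Adj b c) (hbd : G.Adj b d) (hcd : c ≠ d) :
    HasDiamond G :=
  ⟨a, b, c, d, hab.ne, hac.ne, had.ne, hbc.ne, hbd.ne, hcd, hab, hac, had, hbc, hbd⟩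

theorem stmt_1 {V : Type*} [DecidableEq V] (G : SimpleGraph V) [DecidableRel G.Adj]
    (hfree : ¬ HasDiamond G) (t : ℕ) (u : V) (C : G.Walk u u)
    (hC : C.IsCycle) (hlen : C.length = 2 * t + 1)
    (hshort : ∀ (w : V) (D : G.Walk w w), D.IsCycle → Odd D.length → 2 * t + 1 ≤ D.length)
    (v : V) (hv : v ∉ C.support) :
    (C.support.toFinset.filter (fun c => G.Adj v c)).card ≤ t := by
  suffices ∀ d ∈ C.darts, ¬ (G.Adj v d.fst ∧ G.Adj v d.snd) by
    have := hC.two_mul_card_filter_le_length (fun c => G.Adj v c) this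
    omega
  rintro d hd ⟨hvx, hvy⟩
  have hC3 : C.length = 3 := by
    have : 2 * t + 1 ≤ 3 := hshort v _ (Walk.isCycle_triangle hvx d.adj hvy.symm) ⟨1, rfl⟩
    have := hC.three_le_length
    omega
  obtain ⟨z, hz, hzx, hzy⟩ := Walk.exists_adj_adj_of_length_eq_three hC3 hd
  exact hfree (.of_adj d.adj hvx.symm hzx.symm hvy.symm hzy.symm (ne_of_mem_of_not_mem hz hv).symm)
end

section
/- For b ≥ 2 and a ≥ 0 (with n ≥ a+b+5), the graph F_n(a,b) contains no copy of K4^- (the diamond graph). -/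
/-- The underlying relation of the graph `F_n(a,b)` of Construction A. The vertices of
`Fin n` are laid out as: `0` is the vertex of `I`; `1, 2` form `A₁ = {u₁, u₂}`;
`3, 4` form `B₁ = {v₁, v₂}`; `[5, 5+a)` is `A₂`; `[5+a, 5+a+b)` is `B₂`;
the remaining `n-a-b-5` vertices form `C`. The edges are those of the complete
bipartite graphs `K(A₁∪A₂∪C, B₂)`, `K(A₂, B₁)`, `K(I, A₁∪B₁∪C)`, together with the
two independent matching edges `u₁v₁` and `u₂v₂`. -/
def FRel (a b : ℕ) {n : ℕ} (p q : Fin n) : Prop :=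
  ((p.1 = 1 ∨ p.1 = 2 ∨ (5 ≤ p.1 ∧ p.1 < 5 + a) ∨ 5 + a + b ≤ p.1) ∧
      (5 + a ≤ q.1 ∧ q.1 < 5 + a + b)) ∨
    ((5 ≤ p.1 ∧ p.1 < 5 + a) ∧ (q.1 = 3 ∨ q.1 = 4)) ∨
    (p.1 = 0 ∧ (q.1 = 1 ∨ q.1 = 2 ∨ q.1 = 3 ∨ q.1 = 4 ∨ 5 + a + b ≤ q.1)) ∨
    (p.1 = 1 ∧ q.1 = 3) ∨ (p.1 = 2 ∧ q.1 = 4)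

/-- The graph `F_n(a,b)` of Construction A. -/
def Fgraph (n a b : ℕ) : SimpleGraph (Fin n) := SimpleGraph.fromRel (FRel a b)


def ETb (u v : Fin 8) : Bool :=
  ((u=1&&v=6)||(u=2&&v=6)||(u=5&&v=6)||(u=7&&v=6)||(u=5&&v=3)||(u=5&&v=4)||
   (u=0&&v=1)||(u=0&&v=2)||(u=0&&v=3)||(u=0&&v=4)||(u=0&&v=7)||(u=1&&v=3)||(u=2&&v=4))

def T (a b x : ℕ) : Fin 8 :=
  if x < 1 then 0 else if x < 2 then 1 else if x < 3 then 2 else if x < 4 then 3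
  else if x < 5 then 4 else if x < 5+a then 5 else if x < 5+a+b then 6 else 7

lemma triT : ∀ u v w : Fin 8, (ETb u v || ETb v u) → (ETb u w || ETb w u) → (ETb v w || ETb w v) →
    ((u.1=0∧v.1=1∧w.1=3)∨(u.1=0∧v.1=3∧w.1=1)∨(u.1=1∧v.1=0∧w.1=3)∨(u.1=1∧v.1=3∧w.1=0)∨
     (u.1=3∧v.1=0∧w.1=1)∨(u.1=3∧v.1=1∧w.1=0)∨
     (u.1=0∧v.1=2∧w.1=4)∨(u.1=0∧v.1=4∧w.1=2)∨(u.1=2∧v.1=0∧w.1=4)∨(u.1=2∧v.1=4∧w.1=0)∨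
     (u.1=4∧v.1=0∧w.1=2)∨(u.1=4∧v.1=2∧w.1=0)) := by
  decide

lemma Tval (a b m : ℕ) : (T a b m).1 < 5 → (T a b m).1 = m := by
  unfold T; split_ifs <;> omega

set_option maxHeartbeats 1000000 in
lemma adjT {n : ℕ} (a b : ℕ) (p q : Fin n) (h : (Fgraph n a b).Adj p q) :
    (ETb (T a b p.1) (T a b q.1) || ETb (T a b q.1) (T a b p.1)) = true := by
  rw [Fgraph, SimpleGraph.fromRel_adj] at h
  obtain ⟨-, h⟩ := h
  unfold FRel at h
  unfold T
  split_ifs <;> first | decide | (exfalso; omega)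

theorem stmt_6 (n a b : ℕ) (h : a + b + 5 ≤ n) (hb : 2 ≤ b) :
    ¬ HasDiamond (Fgraph n a b) := by
  rintro ⟨x, y, z, w, hxy, hxz, hxw, hyz, hyw, hzw, axy, axz, axw, ayz, ayw⟩
  have t1 := triT _ _ _ (adjT a b x y axy) (adjT a b x z axz) (adjT a b y z ayz)
  have t2 := triT _ _ _ (adjT a b x y axy) (adjT a b x w axw) (adjT a b y w ayw)
  have vx := Tval a b x.1
  have vy := Tval a b y.1
  have vz := Tval a b z.1
  have vw := Tval a b w.1
  have hzw' : z.1 ≠ w.1 := fun e => hzw (Fin.val_injective e)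
  omega
end

section
/- For integers n ≥ 10, every integer m with 3n - 11 ≤ m ≤ ⌊(n-1)/2⌋·⌈(n-1)/2⌉ + 2 can be written as m = b(n-b-3) + n + a - b + 1 for some integers a ≥ 0, b ≥ 2 with a + b ≤ n - 5. -/
/-!
For fixed `b`, letting `a` run over `0, …, n - b - 5` sweeps the interval
`[lo b, lo b + n - b - 5]` with `lo b = b (n - b - 3) + n - b + 1`. Consecutive intervals
overlap (the next one starts `b - 1` below the end of the current one), so for
`b = 2, …, ⌊(n - 5)/2⌋` they cover everything from `lo 2 = 3n - 11` to the end of the last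
one, which a parity computation identifies with `⌊(n-1)/2⌋ ⌈(n-1)/2⌉ + 2`.
-/

open Set

theorem Int.exists_mem_Icc_of_le_succ {lo hi : ℤ → ℤ} {b₀ : ℤ}
    (hchain : ∀ b, b₀ ≤ b → lo (b + 1) ≤ hi b + 1) {B : ℤ} (hB : b₀ ≤ B) {m : ℤ}
    (hm : m ∈ Icc (lo b₀) (hi B)) : ∃ b ∈ Icc b₀ B, m ∈ Icc (lo b) (hi b) := by
  induction B, hB using Int.leInduction generalizing m with
  | base => exact ⟨b₀, ⟨le_rfl, le_rfl⟩, hm⟩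
  | succ B hB ih =>
    by_cases hmB : m ≤ hi B
    · obtain ⟨b, ⟨hb₀, hbB⟩, hmb⟩ := ih ⟨hm.1, hmB⟩
      exact ⟨b, ⟨hb₀, by omega⟩, hmb⟩
    · exact ⟨B + 1, ⟨by omega, le_rfl⟩, by have := hchain B hB; omega, hm.2⟩

theorem Int.sub_five_div_two_mul_add_eq (n : ℤ) :
    (n - 5) / 2 * (n - (n - 5) / 2 - 5) + 2 * n - 4 = (n - 1) / 2 * (n / 2) + 2 := by
  obtain ⟨k, rfl | rfl⟩ := Int.even_or_odd' n
  · rw [show (2 * k - 5) / 2 = k - 3 by omega, show (2 * k - 1) / 2 = k - 1 by omega,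
      show 2 * k / 2 = k by omega]
    ring
  · rw [show (2 * k + 1 - 5) / 2 = k - 2 by omega, show (2 * k + 1 - 1) / 2 = k by omega,
      show (2 * k + 1) / 2 = k by omega]
    ring

theorem stmt_10 (n m : ℤ) (hn : 10 ≤ n) (hm₁ : 3 * n - 11 ≤ m)
    (hm₂ : m ≤ ((n - 1) / 2) * (n / 2) + 2) :
    ∃ a b : ℤ, 0 ≤ a ∧ 2 ≤ b ∧ a + b ≤ n - 5 ∧
      m = b * (n - b - 3) + n + a - b + 1 := by
  set lo : ℤ → ℤ := fun b ↦ b * (n - b - 3) + n - b + 1 with hlo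
  have hchain : ∀ b, 2 ≤ b → lo (b + 1) ≤ lo b + (n - b - 5) + 1 := by
    intro b hb
    simp only [hlo]
    linarith
  have hm : m ∈ Icc (lo 2) (lo ((n - 5) / 2) + (n - (n - 5) / 2 - 5)) := by
    have := Int.sub_five_div_two_mul_add_eq n
    constructor <;> simp only [hlo] <;> linarith
  obtain ⟨b, ⟨hb₂, hbB⟩, hmb⟩ :=
    Int.exists_mem_Icc_of_le_succ (hi := fun b ↦ lo b + (n - b - 5)) hchain (by omega) hm
  refine ⟨m - lo b, b, by linarith [hmb.1], hb₂, by linarith [hmb.2], ?_⟩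
  simp only [hlo]
  ring
end
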